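/- Let R = M_n(D) be the n×n matrix ring over a principal left ideal domain D. Then the left R-module R is a direct sum of n virtually simple left R-modules, each isomorphic to the column module D^(n) of column vectors. -/
import Mathlib


def VirtuallySimple (R : Type*) [Ring R] (M : Type*) [AddCommGroup M] [Module R M] : Prop :=
  Nontrivial M ∧ ∀ N : Submodule R M, N ≠ ⊥ → Nonempty (N ≃ₗ[R] M)

/-- The column module `D^(n)`: matrices act on column vectors by `mulVec`. -/
noncomputable instance colSMul (D : Type*) [Ring D] (n : ℕ) :
    SMul (Matrix (Fin n) (Fin n) D) (Fin n → D) :=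
  ⟨fun A v => A.mulVec v⟩

noncomputable instance colModule (D : Type*) [Ring D] (n : ℕ) :
    Module (Matrix (Fin n) (Fin n) D) (Fin n → D) where
  one_smul v := Matrix.one_mulVec v
  mul_smul A B v := by
    show (A * B).mulVec v = A.mulVec (B.mulVec v)
    rw [Matrix.mulVec_mulVec]
  smul_zero A := Matrix.mulVec_zero A
  smul_add A u v := Matrix.mulVec_add A u v
  add_smul A B v := Matrix.add_mulVec A B v
  zero_smul v := Matrix.zero_mulVec v

section Aux
variable {D : Type*} [Ring D] {n : ℕ}

lemma colsmul_def (A : Matrix (Fin n) (Fin n) D) (v : Fin n → D) : A • v = A.mulVec v := rfl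

lemma std_mulVec (i j : Fin n) (d : D) (v : Fin n → D) (i' : Fin n) :
    (Matrix.single i j d).mulVec v i' = if i = i' then d * v j else 0 := by
  simp [Matrix.mulVec, dotProduct, Matrix.single, ite_and, Finset.sum_ite_eq]

/-- The left ideal of `i0`-entries of vectors in a submodule `N` of the column module. -/
def entryIdeal (i0 : Fin n) (N : Submodule (Matrix (Fin n) (Fin n) D) (Fin n → D)) :
    Ideal D where
  carrier := {d | ∃ v ∈ N, v i0 = d}
  add_mem' := by rintro a b ⟨v, hv, rfl⟩ ⟨w, hw, rfl⟩; exact ⟨v + w, N.add_mem hv hw, rfl⟩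
  zero_mem' := ⟨0, N.zero_mem, rfl⟩
  smul_mem' := by
    rintro c x ⟨v, hv, rfl⟩
    refine ⟨(Matrix.single i0 i0 c) • v, N.smul_mem _ hv, ?_⟩
    rw [colsmul_def, std_mulVec, if_pos rfl, smul_eq_mul]

lemma mem_iff_entry (i0 : Fin n) (N : Submodule (Matrix (Fin n) (Fin n) D) (Fin n → D))
    (v : Fin n → D) : v ∈ N ↔ ∀ i, v i ∈ entryIdeal i0 N := by
  constructor
  · intro hv i
    refine ⟨Matrix.single i0 i 1 • v, N.smul_mem _ hv, ?_⟩
    rw [colsmul_def, std_mulVec, if_pos rfl, one_mul]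
  · intro h
    choose w hw hval using h
    have hv : v = ∑ i, Matrix.single i i0 (1 : D) • w i := by
      funext i'
      rw [Finset.sum_apply]
      have : ∀ i, (Matrix.single i i0 (1 : D) • w i) i'
          = if i = i' then w i i0 else 0 := by
        intro i; rw [colsmul_def, std_mulVec, one_mul]
      simp only [this, Finset.sum_ite_eq', Finset.mem_univ, if_pos, hval]
    rw [hv]
    exact Submodule.sum_mem N fun i _ => N.smul_mem _ (hw i)

lemma colEquiv_of_ne_bot [IsDomain D] (hD : ∀ I : Ideal D, I.IsPrincipal) (hn : 0 < n)
    (N : Submodule (Matrix (Fin n) (Fin n) D) (Fin n → D)) (hN : N ≠ ⊥) :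
    Nonempty (N ≃ₗ[Matrix (Fin n) (Fin n) D] (Fin n → D)) := by
  set i0 : Fin n := ⟨0, hn⟩
  set I : Ideal D := entryIdeal i0 N with hI
  obtain ⟨a, ha⟩ := (hD I).principal
  have ha' : I = Ideal.span {a} := by rw [ha]
  obtain ⟨v, hvN, hv0⟩ := Submodule.exists_mem_ne_zero_of_ne_bot hN
  have ha0 : a ≠ 0 := by
    rintro rfl
    obtain ⟨i1, hi1⟩ := Function.ne_iff.mp hv0
    have : v i1 ∈ I := (mem_iff_entry i0 N v).mp hvN i1
    rw [ha', Ideal.mem_span_singleton'] at this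
    obtain ⟨c, hc⟩ := this
    exact hi1 (by rw [← hc, mul_zero]; rfl)
  have hmem : ∀ d : D, d ∈ I ↔ ∃ c : D, c * a = d := by
    intro d
    rw [ha', Ideal.mem_span_singleton']
  have fmem : ∀ v : Fin n → D, (fun i => v i * a) ∈ N := by
    intro v
    rw [mem_iff_entry i0]
    intro i
    exact (hmem _).mpr ⟨v i, rfl⟩
  let f : (Fin n → D) →ₗ[Matrix (Fin n) (Fin n) D] N :=
    { toFun := fun v => ⟨fun i => v i * a, fmem v⟩
      map_add' := by intro u w; ext i; exact add_mul _ _ _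
      map_smul' := by
        intro A v
        ext i
        show (A.mulVec v) i * a = (A.mulVec fun k => v k * a) i
        simp [Matrix.mulVec, dotProduct, Finset.sum_mul, mul_assoc] }
  have hinj : Function.Injective f := by
    intro u w huw
    funext i
    have : u i * a = w i * a := congrFun (congrArg (Subtype.val) huw) i
    exact mul_right_cancel₀ ha0 this
  have hsurj : Function.Surjective f := by
    rintro ⟨w, hw⟩
    have : ∀ i, ∃ c : D, c * a = w i := by
      intro i
      exact (hmem _).mp ((mem_iff_entry i0 N w).mp hw i)
    choose c hc using this
    exact ⟨c, Subtype.ext (funext fun i => hc i)⟩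
  exact ⟨(LinearEquiv.ofBijective f ⟨hinj, hsurj⟩).symm⟩

lemma virtuallySimple_of_equiv {R M M' : Type*} [Ring R] [AddCommGroup M] [Module R M]
    [AddCommGroup M'] [Module R M'] (e : M ≃ₗ[R] M')
    (h : (Nontrivial M' ∧ ∀ N : Submodule R M', N ≠ ⊥ → Nonempty (N ≃ₗ[R] M'))) :
    (Nontrivial M ∧ ∀ N : Submodule R M, N ≠ ⊥ → Nonempty (N ≃ₗ[R] M)) := by
  constructor
  · have := h.1
    exact e.toEquiv.nontrivial
  · intro N hN
    have hmap : N.map (e : M →ₗ[R] M') ≠ ⊥ := by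
      obtain ⟨x, hxN, hx0⟩ := Submodule.exists_mem_ne_zero_of_ne_bot hN
      intro hb
      have : e x ∈ N.map (e : M →ₗ[R] M') := ⟨x, hxN, rfl⟩
      rw [hb, Submodule.mem_bot] at this
      exact hx0 (by simpa using e.injective (by simpa using this))
    obtain ⟨g⟩ := h.2 _ hmap
    exact ⟨((e.submoduleMap N).trans g).trans e.symm⟩

/-- The `j`-th column submodule of the matrix ring. -/
def colSub (j : Fin n) : Submodule (Matrix (Fin n) (Fin n) D) (Matrix (Fin n) (Fin n) D) where
  carrier := {A : Matrix (Fin n) (Fin n) D | ∀ i k, k ≠ j → A i k = 0}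
  zero_mem' := fun _ _ _ => rfl
  add_mem' := by
    intro A B hA hB i k hk
    show A i k + B i k = 0
    rw [hA i k hk, hB i k hk, add_zero]
  smul_mem' := by
    intro B A hA i k hk
    show (B * A) i k = 0
    rw [Matrix.mul_apply]
    exact Finset.sum_eq_zero fun m _ => by rw [hA m k hk, mul_zero]

def colMap (j : Fin n) : colSub (D := D) (n := n) j →ₗ[Matrix (Fin n) (Fin n) D] (Fin n → D) where
  toFun A := fun i => (A : Matrix (Fin n) (Fin n) D) i j
  map_add' A B := rfl
  map_smul' B A := by
    funext i
    show (B * (A : Matrix (Fin n) (Fin n) D)) i j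
        = B.mulVec (fun i => (A : Matrix (Fin n) (Fin n) D) i j) i
    simp [Matrix.mul_apply, Matrix.mulVec, dotProduct]

lemma colMap_bij (j : Fin n) : Function.Bijective (colMap (D := D) (n := n) j) := by
  constructor
  · intro A B hAB
    ext i k
    by_cases hk : k = j
    · subst hk; exact congrFun hAB i
    · rw [A.2 i k hk, B.2 i k hk]
  · intro v
    refine ⟨⟨Matrix.of fun i k => if k = j then v i else 0, fun i k hk => if_neg hk⟩, ?_⟩
    funext i
    exact if_pos rfl

noncomputable def colEquiv (j : Fin n) :
    colSub (D := D) (n := n) j ≃ₗ[Matrix (Fin n) (Fin n) D] (Fin n → D) :=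
  LinearEquiv.ofBijective (colMap j) (colMap_bij j)

lemma colSub_indep : iSupIndep (colSub (D := D) (n := n)) := by
  intro j
  rw [disjoint_iff, eq_bot_iff]
  rintro A ⟨h1, h2⟩
  have hW : (⨆ i, ⨆ (_ : i ≠ j), colSub (D := D) (n := n) i) ≤
      { carrier := {A : Matrix (Fin n) (Fin n) D | ∀ i', A i' j = 0}
        zero_mem' := fun _ => rfl
        add_mem' := by
          intro A B hA hB i'
          show A i' j + B i' j = 0
          rw [hA i', hB i', add_zero]
        smul_mem' := by
          intro B A hA i'
          show (B * A) i' j = 0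
          rw [Matrix.mul_apply]
          exact Finset.sum_eq_zero fun m _ => by rw [hA m, mul_zero] } := by
    refine iSup₂_le fun i hij => ?_
    intro A hA i'
    exact hA i' j (fun h => hij (by simp [h]))
  have h2' := hW h2
  show A ∈ (⊥ : Submodule (Matrix (Fin n) (Fin n) D) (Matrix (Fin n) (Fin n) D))
  rw [Submodule.mem_bot]
  ext i k
  by_cases hk : k = j
  · subst hk; exact h2' i
  · exact h1 i k hk

lemma colSub_top : (⨆ j, colSub (D := D) (n := n) j) = ⊤ := by
  rw [eq_top_iff]
  intro A _
  have hA : A = ∑ j, (Matrix.of fun i k => if k = j then A i k else 0) := by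
    ext i k
    rw [Matrix.sum_apply]
    simp
  rw [hA]
  exact Submodule.sum_mem _ fun j _ =>
    Submodule.mem_iSup_of_mem j (p := colSub (D := D) (n := n)) (fun i k hk => if_neg hk)

end Aux

/-- Over `R = Mₙ(D)` with `D` a principal left ideal domain, the left module `R` is a
direct sum of `n` virtually simple modules, each isomorphic to the column module `D^(n)`. -/
theorem stmt12 (D : Type*) [Ring D] [IsDomain D] (hD : ∀ I : Ideal D, I.IsPrincipal)
    (n : ℕ) (hn : 0 < n) :
    ∃ V : Fin n → Submodule (Matrix (Fin n) (Fin n) D) (Matrix (Fin n) (Fin n) D),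
      iSupIndep V ∧ iSup V = ⊤ ∧
      (∀ j, V j = {A : Matrix (Fin n) (Fin n) D | ∀ i k, k ≠ j → A i k = 0}) ∧
      ∀ j, VirtuallySimple (Matrix (Fin n) (Fin n) D) (V j) ∧
        Nonempty (V j ≃ₗ[Matrix (Fin n) (Fin n) D] (Fin n → D)) := by
  refine ⟨colSub, colSub_indep, colSub_top, fun j => rfl, fun j => ?_⟩
  have hvs : VirtuallySimple (Matrix (Fin n) (Fin n) D) (Fin n → D) := by
    constructor
    · refine ⟨0, (fun _ => 1), fun h => ?_⟩
      have := congrFun h ⟨0, hn⟩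
      exact zero_ne_one this
    · exact colEquiv_of_ne_bot hD hn
  exact ⟨virtuallySimple_of_equiv (colEquiv j) hvs, ⟨colEquiv j⟩⟩
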